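/- arXiv:2407.20373 — 2 statements merged into one kernel-verified Lean document; each statement's English description precedes it below -/
import Mathlib

section
/- Let p ∈ (1,∞) and a ∈ (0,1). Define, for s,t > 0, b₀(p,a,s,t) := min{a/2, ((1/2)·((p−1)/p)·(s/t))^{p/(p−1)}}, and M(p,a,s,t) := ((p−1)/p)^{p−1}·min{b₀²/2, (b₀/2)·s^{p/(p−1)}} if p ∈ (1,2), and M(p,a,s,t) := (1/2)·((p−1)/p)^{p−1}·b₀^{p−1}·s^p if p ≥ 2. Then for every absolutely continuous function g : [0,a] → ℝ with g(0) = 0, g′ ∈ L^p(0,a) and g′ > 0 a.e. on (0,a), one has ∫₀^a x·g′(x)^{p−1}·g(x) dx ≥ M(p, a, ‖g‖_∞, ‖g′‖_{L^p(0,a)}). -/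
/-
Since `g' > 0`, `g` is increasing, so `‖g‖_∞ = g a =: s`; choose `x₀` with `g x₀ = s / 2`.
On `(x₀, a)` the integrand is at least `x₀ (s / 2) g'^{p-1}`. Hölder's inequality on
`(0, x₀)` gives `x₀ ≥ (s / (2t))^{p/(p-1)}` with `t = ‖g'‖_p`, and on `(x₀, a)`, where
`∫ g' = s / 2`, it bounds `∫ g'^{p-1}` from below: by interpolating between `g'^{p-1}` and
`g'^p` when `p < 2`, by comparing with the constant `1` when `p ≥ 2`. What is left is an elementary comparison with `M`.
-/

open MeasureTheory Set Filter Topology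

open scoped Classical in
/-- `b₀(p,a,s,t) := min { a/2, ((1/2)((p-1)/p)(s/t))^{p/(p-1)} }`. -/
noncomputable def b0 (p a s t : ℝ) : ℝ :=
  min (a / 2) ((1 / 2 * ((p - 1) / p) * (s / t)) ^ (p / (p - 1)))

open scoped Classical in
/-- The function `M(p,a,s,t)` of Proposition 4.1:
for `p ∈ (1,2)`, `M = ((p-1)/p)^{p-1} min { b₀²/2, (b₀/2) s^{p/(p-1)} }`;
for `p ≥ 2`, `M = (1/2)((p-1)/p)^{p-1} b₀^{p-1} s^p`. -/
noncomputable def Mfun (p a s t : ℝ) : ℝ :=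
  if p < 2 then
    ((p - 1) / p) ^ (p - 1) * min (b0 p a s t ^ 2 / 2) (b0 p a s t / 2 * s ^ (p / (p - 1)))
  else
    (1 / 2) * ((p - 1) / p) ^ (p - 1) * b0 p a s t ^ (p - 1) * s ^ p

open Real

section Holder
variable {α : Type*} [MeasurableSpace α] {μ : Measure α}

theorem integral_pos_of_ae_pos [NeZero μ] {f : α → ℝ} (hfi : Integrable f μ)
    (hf : ∀ᵐ x ∂μ, 0 < f x) : 0 < ∫ x, f x ∂μ := by
  rw [integral_pos_iff_support_of_nonneg_ae (hf.mono fun _ h => h.le) hfi, pos_iff_ne_zero, Ne,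
    measure_eq_zero_iff_ae_notMem]
  intro h
  exact NeZero.ne μ (ae_eq_bot.mp (eventually_false_iff_eq_bot.mp
    ((hf.and h).mono fun _ hx => hx.2 hx.1.ne')))

theorem MeasureTheory.Integrable.rpow_of_exponent_le [IsFiniteMeasure μ] {f : α → ℝ} {q r : ℝ}
    (hfr : Integrable (fun x => f x ^ r) μ) (hfm : AEMeasurable f μ) (hf : 0 ≤ᵐ[μ] f)
    (hq : 0 ≤ q) (hqr : q ≤ r) : Integrable (fun x => f x ^ q) μ := by
  refine (hfr.add (integrable_const 1)).mono' (hfm.pow_const q).aestronglyMeasurable ?_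
  filter_upwards [hf] with x (hx : 0 ≤ f x)
  rw [norm_of_nonneg (rpow_nonneg hx q)]
  change f x ^ q ≤ f x ^ r + 1
  rcases le_total (f x) 1 with h | h
  · linarith [rpow_le_one hx h hq, rpow_nonneg hx r]
  · linarith [rpow_le_rpow_of_exponent_le h hqr]

theorem integral_rpow_mul_rpow_le {f g : α → ℝ} (hf : 0 ≤ᵐ[μ] f) (hg : 0 ≤ᵐ[μ] g)
    (hfi : Integrable f μ) (hgi : Integrable g μ) {θ η : ℝ} (hθ : 0 ≤ θ) (hη : 0 ≤ η)
    (hθη : θ + η = 1) :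
    ∫ x, f x ^ θ * g x ^ η ∂μ ≤ (∫ x, f x ∂μ) ^ θ * (∫ x, g x ∂μ) ^ η := by
  have hprod : 0 ≤ᵐ[μ] fun x => f x ^ θ * g x ^ η := by
    filter_upwards [hf, hg] with x hfx hgx
    exact mul_nonneg (rpow_nonneg hfx θ) (rpow_nonneg hgx η)
  have hmeas : AEStronglyMeasurable (fun x => f x ^ θ * g x ^ η) μ :=
    ((hfi.aemeasurable.pow_const θ).mul (hgi.aemeasurable.pow_const η)).aestronglyMeasurable
  have hofReal : ∀ᵐ x ∂μ, ENNReal.ofReal (f x ^ θ * g x ^ η) =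
      ENNReal.ofReal (f x) ^ θ * ENNReal.ofReal (g x) ^ η := by
    filter_upwards [hf, hg] with x hfx hgx
    rw [ENNReal.ofReal_mul (rpow_nonneg hfx θ), ENNReal.ofReal_rpow_of_nonneg hfx hθ,
      ENNReal.ofReal_rpow_of_nonneg hgx hη]
  rw [integral_eq_lintegral_of_nonneg_ae hprod hmeas, lintegral_congr_ae hofReal,
    integral_eq_lintegral_of_nonneg_ae hf hfi.1, integral_eq_lintegral_of_nonneg_ae hg hgi.1,
    ENNReal.toReal_rpow, ENNReal.toReal_rpow, ← ENNReal.toReal_mul]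
  refine ENNReal.toReal_mono ?_ (ENNReal.lintegral_mul_norm_pow_le
    hfi.aemeasurable.ennreal_ofReal hgi.aemeasurable.ennreal_ofReal hθ hη hθη)
  exact ENNReal.mul_ne_top (ENNReal.rpow_ne_top_of_nonneg hθ hfi.lintegral_lt_top.ne)
    (ENNReal.rpow_ne_top_of_nonneg hη hgi.lintegral_lt_top.ne)

theorem integral_rpow_le_rpow_mul_rpow {f : α → ℝ} (hf : 0 ≤ᵐ[μ] f) {r₀ r₁ θ r : ℝ}
    (hr₀ : 0 ≤ r₀) (hr₁ : 0 ≤ r₁) (hθ₀ : 0 ≤ θ) (hθ₁ : θ ≤ 1) (hr : θ * r₀ + (1 - θ) * r₁ = r)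
    (hf₀ : Integrable (fun x => f x ^ r₀) μ) (hf₁ : Integrable (fun x => f x ^ r₁) μ) :
    ∫ x, f x ^ r ∂μ ≤ (∫ x, f x ^ r₀ ∂μ) ^ θ * (∫ x, f x ^ r₁ ∂μ) ^ (1 - θ) := by
  refine le_of_eq_of_le (integral_congr_ae ?_) (integral_rpow_mul_rpow_le
    (hf.mono fun x hx => rpow_nonneg hx r₀) (hf.mono fun x hx => rpow_nonneg hx r₁) hf₀ hf₁
    hθ₀ (sub_nonneg.2 hθ₁) (add_sub_cancel _ _))
  filter_upwards [hf] with x hx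
  rw [← rpow_mul hx, ← rpow_mul hx, ← rpow_add_of_nonneg hx
    (mul_nonneg hr₀ hθ₀) (mul_nonneg hr₁ (sub_nonneg.2 hθ₁)), ← hr, mul_comm r₀, mul_comm r₁]

end Holder

section HolderOnIntervals
variable {f : ℝ → ℝ} {a p x : ℝ}

theorem setIntegral_Ioc_le_rpow_mul {u v r : ℝ} (huv : u ≤ v) (hr : 1 ≤ r)
    (hf : 0 ≤ᵐ[volume.restrict (Ioc u v)] f) (hfr : IntegrableOn (fun x => f x ^ r) (Ioc u v)) :
    ∫ x in Ioc u v, f x ≤ (∫ x in Ioc u v, f x ^ r) ^ (1 / r) * (v - u) ^ (1 - 1 / r) := by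
  have hr₀ : 0 < r := zero_lt_one.trans_le hr
  have h := integral_rpow_le_rpow_mul_rpow (r₁ := 0) (θ := 1 / r) (r := 1) hf hr₀.le le_rfl
    (by positivity) (div_le_one_of_le₀ hr hr₀.le) (by field_simp; ring) hfr (by simp)
  simpa [huv] using h

theorem setIntegral_Ioc_zero_le (hp : 1 ≤ p) (hf : 0 ≤ᵐ[volume.restrict (Ioc 0 a)] f)
    (hfp : IntegrableOn (fun x => f x ^ p) (Ioc 0 a)) (hx : x ∈ Icc 0 a) :
    ∫ y in Ioc 0 x, f y ≤ (∫ y in Ioc 0 a, f y ^ p) ^ (1 / p) * x ^ (1 - 1 / p) := by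
  have hsub : Ioc 0 x ⊆ Ioc 0 a := Ioc_subset_Ioc_right hx.2
  have hfp₀ : 0 ≤ᵐ[volume.restrict (Ioc 0 a)] fun y => f y ^ p :=
    hf.mono fun y hy => rpow_nonneg hy p
  refine (setIntegral_Ioc_le_rpow_mul hx.1 hp (ae_restrict_of_ae_restrict_of_subset hsub hf)
    (hfp.mono_set hsub)).trans ?_
  rw [sub_zero]
  refine mul_le_mul_of_nonneg_right (rpow_le_rpow ?_ ?_ (by positivity)) (rpow_nonneg hx.1 _)
  · exact setIntegral_nonneg_of_ae_restrict (ae_restrict_of_ae_restrict_of_subset hsub hfp₀)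
  · exact setIntegral_mono_set hfp hfp₀ hsub.eventuallyLE

theorem setIntegral_Ioc_le_of_le_two (hp₁ : 1 ≤ p) (hp₂ : p ≤ 2)
    (hf : 0 ≤ᵐ[volume.restrict (Ioc 0 a)] f) (hfm : AEMeasurable f (volume.restrict (Ioc 0 a)))
    (hfp : IntegrableOn (fun x => f x ^ p) (Ioc 0 a)) (hx : x ∈ Icc 0 a) :
    ∫ y in Ioc x a, f y ≤
      (∫ y in Ioc x a, f y ^ (p - 1)) ^ (p - 1) * (∫ y in Ioc 0 a, f y ^ p) ^ (2 - p) := by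
  have hsub : Ioc x a ⊆ Ioc 0 a := Ioc_subset_Ioc_left hx.1
  have hfx := ae_restrict_of_ae_restrict_of_subset hsub hf
  have hfp₀ : 0 ≤ᵐ[volume.restrict (Ioc 0 a)] fun y => f y ^ p :=
    hf.mono fun y hy => rpow_nonneg hy p
  have h := integral_rpow_le_rpow_mul_rpow (r₀ := p - 1) (r₁ := p) (θ := p - 1) (r := 1) hfx
    (sub_nonneg.2 hp₁) (by linarith) (sub_nonneg.2 hp₁) (by linarith) (by ring)
    (Integrable.rpow_of_exponent_le (hfp.mono_set hsub) (hfm.mono_set hsub) hfx (sub_nonneg.2 hp₁)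
      (by linarith))
    (hfp.mono_set hsub)
  simp only [rpow_one, show 1 - (p - 1) = 2 - p by ring] at h
  refine h.trans (mul_le_mul_of_nonneg_left (rpow_le_rpow ?_ ?_ (by linarith))
    (rpow_nonneg (setIntegral_nonneg_of_ae_restrict (hfx.mono fun y hy => rpow_nonneg hy _)) _))
  · exact setIntegral_nonneg_of_ae_restrict (ae_restrict_of_ae_restrict_of_subset hsub hfp₀)
  · exact setIntegral_mono_set hfp hfp₀ hsub.eventuallyLE

theorem rpow_setIntegral_Ioc_le_of_two_le (hp : 2 ≤ p) (ha : a ≤ 1)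
    (hf : 0 ≤ᵐ[volume.restrict (Ioc 0 a)] f) (hfm : AEMeasurable f (volume.restrict (Ioc 0 a)))
    (hfp : IntegrableOn (fun x => f x ^ p) (Ioc 0 a)) (hx : x ∈ Icc 0 a) :
    (∫ y in Ioc x a, f y) ^ (p - 1) ≤ ∫ y in Ioc x a, f y ^ (p - 1) := by
  have hsub : Ioc x a ⊆ Ioc 0 a := Ioc_subset_Ioc_left hx.1
  have hfx := ae_restrict_of_ae_restrict_of_subset hsub hf
  have hJ₀ : 0 ≤ ∫ y in Ioc x a, f y ^ (p - 1) :=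
    setIntegral_nonneg_of_ae_restrict (hfx.mono fun y hy => rpow_nonneg hy _)
  have h := setIntegral_Ioc_le_rpow_mul (r := p - 1) hx.2 (by linarith) hfx
    (Integrable.rpow_of_exponent_le (hfp.mono_set hsub) (hfm.mono_set hsub) hfx (by linarith)
      (by linarith))
  have hlen : (a - x) ^ (1 - 1 / (p - 1)) ≤ 1 :=
    rpow_le_one (by linarith [hx.2]) (by linarith [hx.1])
      (sub_nonneg.2 (div_le_one_of_le₀ (by linarith) (by linarith)))
  rw [← le_rpow_inv_iff_of_pos (setIntegral_nonneg_of_ae_restrict hfx) hJ₀ (by linarith),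
    ← one_div]
  exact h.trans (mul_le_of_le_one_right (by positivity) hlen)

end HolderOnIntervals

section Primitive
variable {g g' : ℝ → ℝ} {a : ℝ}

theorem sub_eq_setIntegral_Ioc_of_eq_primitive (hg' : IntegrableOn g' (Ioc 0 a))
    (hg : ∀ x ∈ Icc 0 a, g x = ∫ t in 0..x, g' t) {x y : ℝ} (hx : x ∈ Icc 0 a)
    (hy : y ∈ Icc 0 a) (hxy : x ≤ y) : g y - g x = ∫ t in Ioc x y, g' t := by
  have hI : ∀ z ∈ Icc 0 a, IntervalIntegrable g' volume 0 z := fun z hz =>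
    (intervalIntegrable_iff_integrableOn_Ioc_of_le hz.1).2
      (hg'.mono_set (Ioc_subset_Ioc_right hz.2))
  rw [hg x hx, hg y hy, intervalIntegral.integral_interval_sub_left (hI y hy) (hI x hx),
    intervalIntegral.integral_of_le hxy]

theorem monotoneOn_of_eq_primitive (hg' : IntegrableOn g' (Ioc 0 a))
    (hg : ∀ x ∈ Icc 0 a, g x = ∫ t in 0..x, g' t)
    (hg'₀ : 0 ≤ᵐ[volume.restrict (Ioc 0 a)] g') : MonotoneOn g (Icc 0 a) :=
  fun _ hx _ hy hxy => sub_nonneg.1 <| (sub_eq_setIntegral_Ioc_of_eq_primitive hg' hg hx hy hxy) ▸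
    setIntegral_nonneg_of_ae_restrict
      (ae_restrict_of_ae_restrict_of_subset (Ioc_subset_Ioc hx.1 hy.2) hg'₀)

theorem continuousOn_of_eq_primitive (ha : 0 ≤ a) (hg' : IntegrableOn g' (Ioc 0 a))
    (hg : ∀ x ∈ Icc 0 a, g x = ∫ t in 0..x, g' t) : ContinuousOn g (Icc 0 a) := by
  have := intervalIntegral.continuousOn_primitive_interval (μ := volume) (f := g') (a := 0) (b := a)
    (by rwa [uIcc_of_le ha, integrableOn_Icc_iff_integrableOn_Ioc])
  rw [uIcc_of_le ha] at this
  exact this.congr hg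

theorem exists_setIntegral_Ioc_eq_half_of_eq_primitive (ha : 0 ≤ a)
    (hg' : IntegrableOn g' (Ioc 0 a)) (hg : ∀ x ∈ Icc 0 a, g x = ∫ t in 0..x, g' t)
    (hg₀ : g 0 = 0) (hg'₀ : 0 ≤ᵐ[volume.restrict (Ioc 0 a)] g') :
    ∃ x₀ ∈ Icc 0 a, g x₀ = g a / 2 ∧
      ∫ t in Ioc 0 x₀, g' t = g a / 2 ∧ ∫ t in Ioc x₀ a, g' t = g a / 2 := by
  have h0 : (0 : ℝ) ∈ Icc 0 a := left_mem_Icc.2 ha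
  have ha : a ∈ Icc 0 a := right_mem_Icc.2 ha
  have hga : 0 ≤ g a := hg₀ ▸ monotoneOn_of_eq_primitive hg' hg hg'₀ h0 ha ha.1
  obtain ⟨x₀, hx₀, hgx₀⟩ : g a / 2 ∈ g '' Icc 0 a := intermediate_value_Icc ha.1
    (continuousOn_of_eq_primitive ha.1 hg' hg) ⟨by rw [hg₀]; linarith, by linarith⟩
  refine ⟨x₀, hx₀, hgx₀, ?_, ?_⟩
  · rw [← sub_eq_setIntegral_Ioc_of_eq_primitive hg' hg h0 hx₀ hx₀.1, hgx₀, hg₀, sub_zero]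
  · rw [← sub_eq_setIntegral_Ioc_of_eq_primitive hg' hg hx₀ ha hx₀.2, hgx₀]
    ring

end Primitive

theorem mul_mul_setIntegral_Ioc_le {w g : ℝ → ℝ} {a x₀ : ℝ} (hw : IntegrableOn w (Ioc 0 a))
    (hw₀ : 0 ≤ᵐ[volume.restrict (Ioc 0 a)] w) (hg : MonotoneOn g (Icc 0 a))
    (hgc : ContinuousOn g (Icc 0 a)) (hg₀ : 0 ≤ g 0) (hx₀ : x₀ ∈ Icc 0 a) :
    x₀ * g x₀ * ∫ x in Ioc x₀ a, w x ≤ ∫ x in Ioc 0 a, x * w x * g x := by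
  have hg_nonneg : ∀ x ∈ Icc 0 a, 0 ≤ g x := fun x hx =>
    hg₀.trans (hg (left_mem_Icc.2 (hx.1.trans hx.2)) hx hx.1)
  have hsub : Ioc x₀ a ⊆ Ioc 0 a := Ioc_subset_Ioc_left hx₀.1
  obtain ⟨C, hC⟩ := isCompact_Icc.exists_bound_of_continuousOn hgc
  have hint : IntegrableOn (fun x => x * w x * g x) (Ioc 0 a) := by
    refine (hw.bdd_mul (c := a) continuous_id.aestronglyMeasurable ?_).mul_bdd (c := C)
      ((hgc.aestronglyMeasurable measurableSet_Icc).mono_set Ioc_subset_Icc_self) ?_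
    all_goals filter_upwards [ae_restrict_mem measurableSet_Ioc] with x hx
    · rw [id, norm_of_nonneg hx.1.le]; exact hx.2
    · exact hC x (Ioc_subset_Icc_self hx)
  calc x₀ * g x₀ * ∫ x in Ioc x₀ a, w x = ∫ x in Ioc x₀ a, x₀ * g x₀ * w x :=
        (integral_const_mul _ _).symm
    _ ≤ ∫ x in Ioc x₀ a, x * w x * g x := by
      refine integral_mono_ae ((hw.mono_set hsub).const_mul _) (hint.mono_set hsub) ?_
      filter_upwards [ae_restrict_mem measurableSet_Ioc,
        ae_restrict_of_ae_restrict_of_subset hsub hw₀] with x hx (hwx : 0 ≤ w x)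
      have : x₀ * g x₀ ≤ x * g x := mul_le_mul hx.1.le
        (hg hx₀ (Ioc_subset_Icc_self (hsub hx)) hx.1.le) (hg_nonneg x₀ hx₀) (hx₀.1.trans hx.1.le)
      linarith [mul_le_mul_of_nonneg_right this hwx]
    _ ≤ ∫ x in Ioc 0 a, x * w x * g x := by
      refine setIntegral_mono_set hint ?_ hsub.eventuallyLE
      filter_upwards [ae_restrict_mem measurableSet_Ioc, hw₀] with x hx hwx
      exact mul_nonneg (mul_nonneg hx.1.le hwx) (hg_nonneg x (Ioc_subset_Icc_self hx))

theorem sub_one_div_rpow_self_lt_half {p : ℝ} (hp : 1 < p) : ((p - 1) / p) ^ p < 1 / 2 := by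
  have hp0 : 0 < p := by linarith
  have hc : 0 < (p - 1) / p := div_pos (by linarith) hp0
  calc ((p - 1) / p) ^ p = exp (log ((p - 1) / p) * p) := rpow_def_of_pos hc p
    _ ≤ exp (-1) := by
      gcongr
      calc log ((p - 1) / p) * p ≤ ((p - 1) / p - 1) * p := by
            gcongr; exact log_le_sub_one_of_pos hc
        _ = -1 := by field_simp; ring
    _ < 1 / 2 := exp_neg_one_lt_half

section Constants

variable {p a s t : ℝ}

theorem b0_pos (hp : 1 < p) (ha : 0 < a) (hs : 0 < s) (ht : 0 < t) : 0 < b0 p a s t :=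
  have : 0 < p - 1 := by linarith
  lt_min (half_pos ha) (rpow_pos_of_pos (by positivity) _)

theorem b0_le (hp : 1 < p) (hs : 0 ≤ s) (ht : 0 ≤ t) :
    b0 p a s t ≤ ((p - 1) / p) ^ (p / (p - 1)) * (s / 2 / t) ^ (p / (p - 1)) := by
  have hp0 : 0 ≤ (p - 1) / p := div_nonneg (by linarith) (by linarith)
  rw [← mul_rpow hp0 (by positivity)]
  exact (min_le_right _ _).trans_eq (by ring_nf)

theorem rpow_le_of_le_mul_rpow {x y : ℝ} (hp : 1 < p) (ht : 0 < t) (hx : 0 ≤ x) (hy : 0 ≤ y)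
    (h : y ≤ t * x ^ (1 - 1 / p)) : (y / t) ^ (p / (p - 1)) ≤ x := by
  have hq : (1 - 1 / p) * (p / (p - 1)) = 1 := by
    have : p - 1 ≠ 0 := by linarith
    field_simp
  calc (y / t) ^ (p / (p - 1)) ≤ (x ^ (1 - 1 / p)) ^ (p / (p - 1)) := by
        gcongr
        rwa [div_le_iff₀' ht]
    _ = x := by rw [← rpow_mul hx, hq, rpow_one]

theorem Mfun_le_of_two_le {x J : ℝ} (hp : 2 ≤ p) (ha₀ : 0 < a) (ha₁ : a ≤ 1) (hs : 0 < s)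
    (ht : 0 < t) (hx : (s / 2 / t) ^ (p / (p - 1)) ≤ x) (hJ : (s / 2) ^ (p - 1) ≤ J) :
    Mfun p a s t ≤ x * (s / 2) * J := by
  set c := (p - 1) / p
  set q := p / (p - 1)
  set X := (s / 2 / t) ^ q
  have hp1 : 1 < p := by linarith
  have hc : 0 < c := div_pos (by linarith) (by linarith)
  have hb := b0_pos hp1 ha₀ hs ht
  have hc2 : c ^ (p - 1) * c ^ q ≤ 1 / 2 := by
    have hq : 1 ≤ q := (one_le_div₀ (by linarith)).2 (by linarith)
    calc c ^ (p - 1) * c ^ q = c ^ (p - 1 + q) := (rpow_add hc _ _).symm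
      _ ≤ c ^ p := rpow_le_rpow_of_exponent_ge hc (div_le_one_of_le₀ (by linarith) (by linarith))
          (by linarith)
      _ ≤ 1 / 2 := (sub_one_div_rpow_self_lt_half hp1).le
  have hbp : b0 p a s t ^ (p - 1) ≤ (1 / 2) ^ (p - 2) * (c ^ q * X) := by
    rw [show p - 1 = (p - 2) + 1 by ring, rpow_add_one hb.ne']
    gcongr
    · exact (min_le_left _ _).trans (by linarith)
    · exact b0_le hp1 hs.le ht.le
  have hs2 : (1 / 2) ^ (p - 2) * s ^ p = 4 * (s / 2) ^ p := by
    rw [rpow_sub (by norm_num), div_rpow hs.le (by norm_num)]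
    field_simp
    rw [← mul_rpow (by norm_num) (by norm_num)]
    norm_num
  have hsJ : X * (s / 2) ^ p ≤ x * (s / 2) * J := by
    rw [show (s / 2) ^ p = s / 2 * (s / 2) ^ (p - 1) by
      rw [← rpow_one_add' (by positivity) (by linarith)]; ring_nf, ← mul_assoc]
    have hX : 0 ≤ X := by positivity
    gcongr
    exact mul_nonneg (hX.trans hx) (by positivity)
  rw [Mfun, if_neg (not_lt.2 hp)]
  calc 1 / 2 * c ^ (p - 1) * b0 p a s t ^ (p - 1) * s ^ p
      ≤ 1 / 2 * c ^ (p - 1) * ((1 / 2) ^ (p - 2) * (c ^ q * X)) * s ^ p := by gcongr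
    _ = 1 / 2 * (c ^ (p - 1) * c ^ q) * X * ((1 / 2) ^ (p - 2) * s ^ p) := by ring
    _ = 2 * (c ^ (p - 1) * c ^ q) * (X * (s / 2) ^ p) := by rw [hs2]; ring
    _ ≤ 2 * (1 / 2) * (X * (s / 2) ^ p) := by gcongr
    _ ≤ x * (s / 2) * J := by linarith

theorem Mfun_le_of_lt_two {x J : ℝ} (hp : 1 < p) (hp2 : p < 2) (ha : 0 < a) (hs : 0 < s)
    (ht : 0 < t) (hx : (s / 2 / t) ^ (p / (p - 1)) ≤ x)
    (hJ : s / 2 ≤ J ^ (p - 1) * (t ^ p) ^ (2 - p)) (hJ₀ : 0 ≤ J) :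
    Mfun p a s t ≤ x * (s / 2) * J := by
  set c := (p - 1) / p
  set q := p / (p - 1)
  set X := (s / 2 / t) ^ q
  have hp1 : 0 < p - 1 := by linarith
  have hc : 0 < c := div_pos hp1 (by linarith)
  have hc1' : c ≤ 1 := div_le_one_of_le₀ (by linarith) (by linarith)
  have hc1 : c ^ (p - 1) ≤ 1 := rpow_le_one hc.le hc1' hp1.le
  have hq : q * (p - 1) = p := div_mul_cancel₀ p hp1.ne'
  have hb := b0_pos hp ha hs ht
  have hbX : b0 p a s t ≤ c ^ q * X := b0_le hp hs.le ht.le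
  have hT : 0 < t ^ p := by positivity
  have hJ' : (s / 2) ^ p * (t ^ p) ^ (p - 2) ≤ (s / 2 * J) ^ (p - 1) := by
    have : s / 2 * (t ^ p) ^ (p - 2) ≤ J ^ (p - 1) := by
      rwa [show p - 2 = -(2 - p) by ring, rpow_neg hT.le, ← div_eq_mul_inv,
        div_le_iff₀ (by positivity)]
    have hsp : (s / 2) ^ p = (s / 2) ^ (p - 1) * (s / 2) := by
      rw [← rpow_add_one (by positivity)]; ring_nf
    rw [mul_rpow (by positivity) hJ₀, hsp, mul_assoc]
    gcongr
  suffices ∃ m, 0 ≤ m ∧ m ^ (p - 1) ≤ (s / 2) ^ p * (t ^ p) ^ (p - 2) ∧ Mfun p a s t ≤ X * m by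
    obtain ⟨m, hm, hmJ, hM⟩ := this
    have : m ≤ s / 2 * J := (rpow_le_rpow_iff hm (by positivity) hp1).1 (hmJ.trans hJ')
    calc Mfun p a s t ≤ X * m := hM
      _ ≤ x * (s / 2 * J) := by gcongr; exact (by positivity : 0 ≤ X).trans hx
      _ = x * (s / 2) * J := by ring
  rw [Mfun, if_pos hp2]
  have hmin : 0 ≤ min (b0 p a s t ^ 2 / 2) (b0 p a s t / 2 * s ^ q) :=
    le_min (by positivity) (by positivity)
  rcases le_total 1 (t ^ p) with hT1 | hT1
  · refine ⟨X, by positivity, ?_, ?_⟩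
    · rw [← rpow_mul (by positivity), hq, div_rpow (by positivity) ht.le, div_eq_mul_inv]
      gcongr
      rw [← rpow_neg_one]
      exact rpow_le_rpow_of_exponent_le hT1 (by linarith)
    · have hbX' : b0 p a s t ≤ X :=
        hbX.trans (mul_le_of_le_one_left (by positivity) (rpow_le_one hc.le hc1' (by positivity)))
      calc c ^ (p - 1) * min (b0 p a s t ^ 2 / 2) (b0 p a s t / 2 * s ^ q)
          ≤ b0 p a s t ^ 2 / 2 := (mul_le_of_le_one_left hmin hc1).trans (min_le_left _ _)
        _ ≤ X * X := by nlinarith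
  · refine ⟨(s / 2) ^ q, by positivity, ?_, ?_⟩
    · rw [← rpow_mul (by positivity), hq]
      exact le_mul_of_one_le_right (by positivity)
        (one_le_rpow_of_pos_of_le_one_of_nonpos hT hT1 (by linarith))
    · have h2c : (2 * c) ^ q ≤ 1 := rpow_le_one (by positivity)
        (by rw [mul_div_assoc', div_le_one (by linarith)]; linarith) (by positivity)
      calc c ^ (p - 1) * min (b0 p a s t ^ 2 / 2) (b0 p a s t / 2 * s ^ q)
          ≤ b0 p a s t / 2 * s ^ q := (mul_le_of_le_one_left hmin hc1).trans (min_le_right _ _)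
        _ ≤ c ^ q * X / 2 * s ^ q := by gcongr
        _ = (2 * c) ^ q / 2 * (X * (s / 2) ^ q) := by
          rw [mul_rpow zero_le_two hc.le, div_rpow hs.le zero_le_two]
          field_simp
        _ ≤ X * (s / 2) ^ q := by
          nlinarith [(by positivity : 0 ≤ X * (s / 2) ^ q)]

end Constants

/-- Lemma 4.4: for every absolutely continuous `g : [0,a] → ℝ` with
`g(0) = 0`, `g' ∈ L^p(0,a)` and `g' > 0` a.e. on `(0,a)`, one has
`∫₀^a x g'(x)^{p-1} g(x) dx ≥ M(p, a, ‖g‖_∞, ‖g'‖_{L^p(0,a)})`.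
Absolute continuity is encoded by `g x = ∫₀^x g'` on `[0,a]` with `g'` integrable. -/
theorem stmt10 (p a : ℝ) (hp : 1 < p) (ha : a ∈ Set.Ioo (0 : ℝ) 1)
    (g g' : ℝ → ℝ)
    (hg'int : IntegrableOn g' (Set.Ioc 0 a) volume)
    (hgAC : ∀ x ∈ Set.Icc (0 : ℝ) a, g x = ∫ t in (0 : ℝ)..x, g' t)
    (hg0 : g 0 = 0)
    (hg'Lp : IntegrableOn (fun x => |g' x| ^ p) (Set.Ioc 0 a) volume)
    (hg'pos : ∀ᵐ x ∂(volume.restrict (Set.Ioc (0 : ℝ) a)), 0 < g' x) :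
    (∫ x in Set.Ioc (0 : ℝ) a, x * g' x ^ (p - 1) * g x) ≥
      Mfun p a (sSup (g '' Set.Icc 0 a))
        ((∫ x in Set.Ioc (0 : ℝ) a, |g' x| ^ p) ^ ((1 : ℝ) / p)) := by
  obtain ⟨ha₀, ha₁⟩ := ha
  have hg'₀ : 0 ≤ᵐ[volume.restrict (Ioc 0 a)] g' := hg'pos.mono fun _ h => h.le
  have habs : (fun x => |g' x| ^ p) =ᵐ[volume.restrict (Ioc 0 a)] fun x => g' x ^ p :=
    hg'pos.mono fun x hx => by simp only [abs_of_pos hx]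
  have hg'p : IntegrableOn (fun x => g' x ^ p) (Ioc 0 a) := hg'Lp.congr habs
  have hmono := monotoneOn_of_eq_primitive hg'int hgAC hg'₀
  have hcont := continuousOn_of_eq_primitive ha₀.le hg'int hgAC
  have : NeZero (volume.restrict (Ioc 0 a)) := ⟨by simp [Measure.restrict_eq_zero, ha₀]⟩
  have hs : 0 < g a := by
    linarith [integral_pos_of_ae_pos hg'int hg'pos, sub_eq_setIntegral_Ioc_of_eq_primitive
      hg'int hgAC (left_mem_Icc.2 ha₀.le) (right_mem_Icc.2 ha₀.le) ha₀.le]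
  have hT : 0 < ∫ x in Ioc 0 a, g' x ^ p :=
    integral_pos_of_ae_pos hg'p (hg'pos.mono fun x hx => rpow_pos_of_pos hx p)
  have ht : 0 < (∫ x in Ioc 0 a, g' x ^ p) ^ (1 / p) := rpow_pos_of_pos hT _
  obtain ⟨x₀, hx₀, hgx₀, hhead, htail⟩ :=
    exists_setIntegral_Ioc_eq_half_of_eq_primitive ha₀.le hg'int hgAC hg0 hg'₀
  have hX := rpow_le_of_le_mul_rpow hp ht hx₀.1 (by linarith)
    (hhead ▸ setIntegral_Ioc_zero_le hp.le hg'₀ hg'p hx₀)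
  have hw := Integrable.rpow_of_exponent_le hg'p hg'int.aemeasurable hg'₀ (by linarith)
    (by linarith : p - 1 ≤ p)
  rw [(hmono.map_isGreatest (isGreatest_Icc ha₀.le)).csSup_eq, integral_congr_ae habs, ge_iff_le]
  refine le_trans ?_ (hgx₀ ▸ mul_mul_setIntegral_Ioc_le hw (hg'₀.mono fun x hx => rpow_nonneg hx _)
    hmono hcont hg0.ge hx₀)
  rcases lt_or_ge p 2 with hp2 | hp2
  · refine Mfun_le_of_lt_two hp hp2 ha₀ hs ht hX ?_
      (setIntegral_nonneg_of_ae_restrict ((ae_restrict_of_ae_restrict_of_subset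
        (Ioc_subset_Ioc_left hx₀.1) hg'₀).mono fun x hx => rpow_nonneg hx _))
    rw [one_div, rpow_inv_rpow hT.le (by linarith), ← htail]
    exact setIntegral_Ioc_le_of_le_two hp.le hp2.le hg'₀ hg'int.aemeasurable hg'p hx₀
  · exact Mfun_le_of_two_le hp2 ha₀ ha₁.le hs ht hX
      (htail ▸ rpow_setIntegral_Ioc_le_of_two_le hp2 ha₁.le hg'₀ hg'int.aemeasurable hg'p hx₀)
end

section
/- Let p ∈ (1,∞), let f : (0,1) → (0,1] be measurable, and let u ∈ L^∞(0,1) satisfy ∫₀¹ f·|u|^p = 1 and ∫₀¹ f·|u|^{p−2}u = 0. Then ∫₀¹ (u⁺)^{p−1} ≥ 1/(2‖u‖_∞) and ∫₀¹ (u⁻)^{p−1} ≥ 1/(2‖u‖_∞). -/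
/-!
Put `g₊ = (u⁺)^{p-1}` and `g₋ = (u⁻)^{p-1}`, so that `|u|^{p-2} u = g₊ - g₋` and
`|u|^{p-1} = g₊ + g₋`. The orthogonality condition says `∫ f g₊ = ∫ f g₋`, and `|u| ≤ ‖u‖_∞`
gives `|u|^p ≤ ‖u‖_∞ |u|^{p-1}`; hence `∫ f |u|^p ≤ ‖u‖_∞ (∫ f g₊ + ∫ f g₋) = 2 ‖u‖_∞ ∫ f g₊`,
and `f ≤ 1` bounds the last integral by `∫ g₊`. Replacing `u` by `-u` swaps `g₊` and `g₋`.
-/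

open MeasureTheory Set Filter Topology

namespace Real

theorem abs_rpow_eq_max_rpow_add_max_neg_rpow {q : ℝ} (hq : q ≠ 0) (x : ℝ) :
    |x| ^ q = max x 0 ^ q + max (-x) 0 ^ q := by
  rcases le_or_gt x 0 with hx | hx
  · rw [abs_of_nonpos hx, max_eq_right hx, max_eq_left (neg_nonneg.2 hx), zero_rpow hq,
      zero_add]
  · rw [abs_of_pos hx, max_eq_left hx.le, max_eq_right (neg_nonpos.2 hx.le), zero_rpow hq,
      add_zero]

theorem abs_rpow_sub_two_mul_self {p : ℝ} (hp : p ≠ 1) (x : ℝ) :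
    |x| ^ (p - 2) * x = max x 0 ^ (p - 1) - max (-x) 0 ^ (p - 1) := by
  have hp' : p - 1 ≠ 0 := sub_ne_zero.2 hp
  have hexp : p - 1 = (p - 2) + 1 := by ring
  rcases lt_trichotomy x 0 with hx | rfl | hx
  · rw [abs_of_neg hx, max_eq_right hx.le, max_eq_left (neg_nonneg.2 hx.le), zero_rpow hp',
      hexp, rpow_add_one (neg_ne_zero.2 hx.ne)]
    ring
  · simp [zero_rpow hp']
  · rw [abs_of_pos hx, max_eq_left hx.le, max_eq_right (neg_nonpos.2 hx.le), zero_rpow hp',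
      hexp, rpow_add_one hx.ne']
    ring

theorem abs_rpow_le_mul_abs_rpow_sub_one {p M x : ℝ} (hp : p ≠ 0) (hx : |x| ≤ M) :
    |x| ^ p ≤ M * |x| ^ (p - 1) := by
  rcases eq_or_ne x 0 with rfl | hx0
  · rw [abs_zero, zero_rpow hp]
    exact mul_nonneg ((abs_nonneg 0).trans hx) (rpow_nonneg le_rfl _)
  · calc |x| ^ p = |x| * |x| ^ (p - 1) := by
          rw [rpow_sub_one (abs_ne_zero.2 hx0), mul_div_cancel₀ _ (abs_ne_zero.2 hx0)]
      _ ≤ M * |x| ^ (p - 1) := by gcongr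

end Real

section

variable {α : Type*} [MeasurableSpace α] {μ : Measure α}

theorem MeasureTheory.MemLp.ae_abs_le_toReal_eLpNorm_top {u : α → ℝ} (hu : MemLp u ⊤ μ) :
    ∀ᵐ x ∂μ, |u x| ≤ (eLpNorm u ⊤ μ).toReal := by
  filter_upwards [ae_le_eLpNormEssSup (f := u) (μ := μ)] with x hx
  rw [← eLpNorm_exponent_top] at hx
  simpa [Real.norm_eq_abs] using ENNReal.toReal_mono hu.2.ne hx

theorem MeasureTheory.MemLp.comp_continuous_top {u : α → ℝ} {φ : ℝ → ℝ} (hφ : Continuous φ)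
    (hu : MemLp u ⊤ μ) : MemLp (fun x => φ (u x)) ⊤ μ := by
  obtain ⟨C, hC⟩ := (isCompact_Icc (a := -(eLpNorm u ⊤ μ).toReal)
    (b := (eLpNorm u ⊤ μ).toReal)).exists_bound_of_continuousOn hφ.continuousOn
  refine memLp_top_of_bound (hφ.comp_aestronglyMeasurable hu.1) C ?_
  filter_upwards [hu.ae_abs_le_toReal_eLpNorm_top] with x hx
  exact hC _ (abs_le.1 hx)

variable [IsFiniteMeasure μ] {p : ℝ} {f u : α → ℝ}

theorem integral_mul_abs_rpow_le_two_mul_integral_rpow_max (hp : 1 < p)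
    (hf : AEStronglyMeasurable f μ) (hf01 : ∀ᵐ x ∂μ, f x ∈ Icc (0 : ℝ) 1) (hu : MemLp u ⊤ μ)
    (hzero : ∫ x, f x * |u x| ^ (p - 2) * u x ∂μ = 0) :
    ∫ x, f x * |u x| ^ p ∂μ ≤
      2 * (eLpNorm u ⊤ μ).toReal * ∫ x, max (u x) 0 ^ (p - 1) ∂μ := by
  set M := (eLpNorm u ⊤ μ).toReal
  have hcont : ∀ s : ℝ, Continuous fun y : ℝ => max (s * y) 0 ^ (p - 1) := fun s =>
    ((continuous_const.mul continuous_id).max continuous_const).rpow_const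
      fun _ => Or.inr (by linarith)
  have hf_top : MemLp f ⊤ μ := memLp_top_of_bound hf 1 <| by
    filter_upwards [hf01] with x hx
    rw [Real.norm_eq_abs, abs_of_nonneg hx.1]
    exact hx.2
  have hint : ∀ s : ℝ, Integrable (fun x => f x * max (s * u x) 0 ^ (p - 1)) μ := fun s =>
    ((hu.comp_continuous_top (hcont s)).mul hf_top).integrable le_top
  have hpos := hint 1
  have hneg := hint (-1)
  simp only [one_mul, neg_one_mul] at hpos hneg
  have hbalance : ∫ x, f x * max (u x) 0 ^ (p - 1) ∂μ
      = ∫ x, f x * max (-u x) 0 ^ (p - 1) ∂μ := by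
    rw [← sub_eq_zero, ← integral_sub hpos hneg]
    refine (integral_congr_ae (Eventually.of_forall fun x => ?_)).trans hzero
    simp only [mul_assoc, Real.abs_rpow_sub_two_mul_self hp.ne', mul_sub]
  have hpointwise : ∀ᵐ x ∂μ, f x * |u x| ^ p
      ≤ M * (f x * max (u x) 0 ^ (p - 1) + f x * max (-u x) 0 ^ (p - 1)) := by
    filter_upwards [hu.ae_abs_le_toReal_eLpNorm_top, hf01] with x hx hfx
    calc f x * |u x| ^ p ≤ f x * (M * |u x| ^ (p - 1)) :=
          mul_le_mul_of_nonneg_left (Real.abs_rpow_le_mul_abs_rpow_sub_one (by linarith) hx) hfx.1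
      _ = _ := by rw [Real.abs_rpow_eq_max_rpow_add_max_neg_rpow (by linarith)]; ring
  have hf_le : ∫ x, f x * max (u x) 0 ^ (p - 1) ∂μ ≤ ∫ x, max (u x) 0 ^ (p - 1) ∂μ := by
    refine integral_mono_ae hpos ?_ ?_
    · simpa using (hu.comp_continuous_top (hcont 1)).integrable le_top
    · filter_upwards [hf01] with x hfx
      exact mul_le_of_le_one_left (Real.rpow_nonneg (le_max_right _ _) _) hfx.2
  calc ∫ x, f x * |u x| ^ p ∂μ
      ≤ ∫ x, M * (f x * max (u x) 0 ^ (p - 1) + f x * max (-u x) 0 ^ (p - 1)) ∂μ := by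
        refine integral_mono_of_nonneg ?_ ((hpos.add hneg).const_mul M) hpointwise
        filter_upwards [hf01] with x hfx
        exact mul_nonneg hfx.1 (Real.rpow_nonneg (abs_nonneg _) _)
    _ = 2 * M * ∫ x, f x * max (u x) 0 ^ (p - 1) ∂μ := by
        rw [integral_const_mul, integral_add hpos hneg, ← hbalance]
        ring
    _ ≤ 2 * M * ∫ x, max (u x) 0 ^ (p - 1) ∂μ :=
        mul_le_mul_of_nonneg_left hf_le (by positivity)

theorem one_div_two_mul_eLpNorm_top_le_integral_rpow_max (hp : 1 < p)
    (hf : AEStronglyMeasurable f μ) (hf01 : ∀ᵐ x ∂μ, f x ∈ Icc (0 : ℝ) 1) (hu : MemLp u ⊤ μ)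
    (hnorm : ∫ x, f x * |u x| ^ p ∂μ = 1)
    (hzero : ∫ x, f x * |u x| ^ (p - 2) * u x ∂μ = 0) :
    1 / (2 * (eLpNorm u ⊤ μ).toReal) ≤ ∫ x, max (u x) 0 ^ (p - 1) ∂μ := by
  have h := integral_mul_abs_rpow_le_two_mul_integral_rpow_max hp hf hf01 hu hzero
  rw [hnorm] at h
  have hM : 0 < 2 * (eLpNorm u ⊤ μ).toReal :=
    lt_of_le_of_ne (by positivity) fun h0 => by rw [← h0, zero_mul] at h; linarith
  rwa [div_le_iff₀' hM]

end

/-- estimate (4.21) in Step 2 of the proof of Proposition 4.1: if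
`f : (0,1) → (0,1]` is measurable and `u ∈ L^∞(0,1)` satisfies `∫₀¹ f|u|^p = 1` and
`∫₀¹ f|u|^{p-2}u = 0`, then `∫₀¹ (u⁺)^{p-1} ≥ 1/(2‖u‖_∞)` and
`∫₀¹ (u⁻)^{p-1} ≥ 1/(2‖u‖_∞)`. -/
theorem stmt19 (p : ℝ) (hp : 1 < p) (f u : ℝ → ℝ)
    (hfmeas : Measurable f)
    (hf : ∀ x ∈ Set.Ioo (0 : ℝ) 1, f x ∈ Set.Ioc (0 : ℝ) 1)
    (hu : MemLp u ⊤ (volume.restrict (Set.Ioo (0 : ℝ) 1)))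
    (hnorm : (∫ x in Set.Ioo (0 : ℝ) 1, f x * |u x| ^ p) = 1)
    (hzero : (∫ x in Set.Ioo (0 : ℝ) 1, f x * |u x| ^ (p - 2) * u x) = 0) :
    (∫ x in Set.Ioo (0 : ℝ) 1, max (u x) 0 ^ (p - 1)) ≥
        1 / (2 * (eLpNorm u ⊤ (volume.restrict (Set.Ioo (0 : ℝ) 1))).toReal) ∧
    (∫ x in Set.Ioo (0 : ℝ) 1, max (-u x) 0 ^ (p - 1)) ≥
        1 / (2 * (eLpNorm u ⊤ (volume.restrict (Set.Ioo (0 : ℝ) 1))).toReal) := by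
  have hf01 : ∀ᵐ x ∂volume.restrict (Ioo (0 : ℝ) 1), f x ∈ Icc (0 : ℝ) 1 :=
    ae_restrict_of_forall_mem measurableSet_Ioo fun x hx => Ioc_subset_Icc_self (hf x hx)
  refine ⟨one_div_two_mul_eLpNorm_top_le_integral_rpow_max hp
    hfmeas.aestronglyMeasurable hf01 hu hnorm hzero, ?_⟩
  have h := one_div_two_mul_eLpNorm_top_le_integral_rpow_max (u := -u) hp
    hfmeas.aestronglyMeasurable hf01 hu.neg (by simpa using hnorm)
    (by simp [integral_neg, hzero])
  rwa [eLpNorm_neg] at h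
end
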